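/- arXiv:1712.04725 — 11 statements merged into one kernel-verified Lean document; each statement's English description precedes it below -/
import Mathlib

section
/- Simultaneous collapse for idealistic primes (Rabinovich trick). Let R be a commutative ring, J, U ⊆ R subsets, and x ∈ R. If the idealistic prime (J ∪ {x}, U) collapses and the idealistic prime (J, U ∪ {x}) collapses, then the idealistic prime (J, U) collapses. -/
/-- The idealistic prime `(J, U)` collapses: the multiplicative submonoid generated by `U`
meets the ideal generated by `J`, i.e. `u + j = 0` for some such `u`, `j`. -/
def IdealisticCollapses {R : Type*} [CommRing R] (J U : Set R) : Prop :=
  ∃ u ∈ Submonoid.closure U, ∃ j ∈ Ideal.span J, u + j = 0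

theorem stmt_0 {R : Type*} [CommRing R] (J U : Set R) (x : R)
    (h1 : IdealisticCollapses (J ∪ {x}) U)
    (h2 : IdealisticCollapses J (U ∪ {x})) :
    IdealisticCollapses J U := by
  obtain ⟨u1, hu1, j1, hj1, he1⟩ := h1
  obtain ⟨u2, hu2, j2, hj2, he2⟩ := h2
  -- decompose u2 = u * x^n
  rw [Submonoid.closure_union, Submonoid.mem_sup] at hu2
  obtain ⟨u, hu, t, ht, hut⟩ := hu2
  rw [Submonoid.mem_closure_singleton] at ht
  obtain ⟨n, rfl⟩ := ht
  -- decompose j1 = j + a * x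
  rw [Ideal.span_union, Submodule.mem_sup] at hj1
  obtain ⟨j, hj, t, ht, rfl⟩ := hj1
  rw [Ideal.mem_span_singleton'] at ht
  obtain ⟨a, rfl⟩ := ht
  set I := Ideal.span J with hI
  -- work in the quotient
  let f := Ideal.Quotient.mk I
  have hfj : f j = 0 := Ideal.Quotient.eq_zero_iff_mem.mpr hj
  have hfj2 : f j2 = 0 := Ideal.Quotient.eq_zero_iff_mem.mpr hj2
  have hux : f u * f x ^ n = 0 := by
    have := congrArg f he2
    simp only [map_add, map_zero] at this
    rw [← hut] at this
    simpa [map_mul, map_pow, hfj2] using this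
  have hu1x : f u1 = f (-(a * x)) := by
    have := congrArg f he1
    simp only [map_add, map_zero, hfj] at this
    have : f u1 + f (a * x) = 0 := by
      rw [← map_add]
      simpa [hfj] using this
    simp [eq_neg_of_add_eq_zero_left this]
  refine ⟨u * u1 ^ n, mul_mem hu (pow_mem hu1 n), -(u * u1 ^ n), ?_, by ring⟩
  rw [← Submodule.neg_mem_iff, neg_neg, ← Ideal.Quotient.eq_zero_iff_mem]
  have : f (u * u1 ^ n) = f u * f (-(a*x)) ^ n := by
    rw [map_mul, map_pow, hu1x]
  rw [this]
  have : f (-(a*x)) ^ n = (-(f a))^n * f x ^ n := by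
    rw [show f (-(a * x)) = -(f a) * f x by push_cast [map_neg, map_mul]; ring, mul_pow]
  rw [this]
  calc f u * ((-(f a))^n * f x ^ n) = (-(f a))^n * (f u * f x ^ n) := by ring
    _ = 0 := by rw [hux, mul_zero]
end

section
/- Formal Nullstellensatz for chains of prime ideals. Let R be a commutative ring and ((J₀,U₀),…,(J_ℓ,U_ℓ)) an idealistic chain in R. There exist prime ideals P₀ ⊆ P₁ ⊆ ⋯ ⊆ P_ℓ of R with J_i ⊆ P_i and U_i ∩ P_i = ∅ for all i = 0,…,ℓ, if and only if the idealistic chain does not collapse, i.e. for all j_i in the ideal generated by J_i and all u_i in the multiplicative submonoid generated by U_i one has u₀·(u₁·(⋯(u_ℓ + j_ℓ)+⋯)+j₁)+j₀ ≠ 0. -/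
/-!
The values `u₀ * (u₁ * (⋯) + j₁) + j₀` of a chain form a multiplicative monoid: it is
`⟨U₀⟩ * T + (J₀)`, where `⟨U₀⟩` is the monoid generated by `U₀` and `T` the monoid of values
of the tail, since `M + I` is multiplicatively closed for a monoid `M` and an ideal `I`.

Both directions go by induction on the length, relative to an ideal `Q` lying below every `Pᵢ`.
If the values avoid `Q`, a prime `p ⊇ Q + (J₀)` avoiding `⟨U₀⟩ * T` exists by the usual Zorn
argument; then `T` avoids `p`, and the induction with `p` in place of `Q` continues the chain
above `p`. Conversely, if `u * v + j ∈ Q ⊆ P₀` then `u * v ∈ P₀`, but `u ∉ P₀` and, by the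
induction with `Q := P₀`, `v ∉ P₀`.
-/

open Finset

theorem Fin.prod_Iio_succ {M : Type*} [CommMonoid M] {n : ℕ} (f : Fin (n + 1) → M) (i : Fin n) :
    ∏ k ∈ Iio i.succ, f k = f 0 * ∏ k ∈ Iio i, f k.succ := by
  simp only [← filter_gt_eq_Iio, prod_filter, Fin.prod_univ_succ, Fin.succ_pos,
    if_true, Fin.succ_lt_succ_iff]

theorem Fin.monotone_cons {α : Type*} [Preorder α] {n : ℕ} {f : Fin n → α} {a : α}
    (ha : ∀ i, a ≤ f i) (hf : Monotone f) : Monotone (Fin.cons a f : Fin (n + 1) → α) :=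
  monotone_iff_forall_lt.2 <| (Fin.liftFun_cons (· ≤ ·)).2 ⟨ha, monotone_iff_forall_lt.1 hf⟩

section

variable {R : Type*} [CommRing R]

def Submonoid.addIdeal (M : Submonoid R) (I : Ideal R) : Submonoid R where
  carrier := {x | ∃ m ∈ M, ∃ i ∈ I, m + i = x}
  one_mem' := ⟨1, M.one_mem, 0, I.zero_mem, add_zero 1⟩
  mul_mem' := by
    rintro _ _ ⟨m, hm, i, hi, rfl⟩ ⟨m', hm', i', hi', rfl⟩
    exact ⟨m * m', M.mul_mem hm hm', m * i' + i * (m' + i'),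
      I.add_mem (I.mul_mem_left _ hi') (I.mul_mem_right _ hi), by ring⟩

theorem Submonoid.mem_addIdeal {M : Submonoid R} {I : Ideal R} {x : R} :
    x ∈ M.addIdeal I ↔ ∃ m ∈ M, ∃ i ∈ I, m + i = x :=
  Iff.rfl

def chainValue {n : ℕ} (u j : Fin n → R) : R :=
  (∏ i, u i) + ∑ i, (∏ k ∈ Iio i, u k) * j i

theorem chainValue_zero (u j : Fin 0 → R) : chainValue u j = 1 := by
  simp [chainValue]

theorem chainValue_succ {n : ℕ} (u j : Fin (n + 1) → R) :
    chainValue u j = u 0 * chainValue (Fin.tail u) (Fin.tail j) + j 0 := by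
  simp only [chainValue, Fin.prod_univ_succ, Fin.sum_univ_succ, Fin.prod_Iio_succ, Fin.tail,
    ← bot_eq_zero, Iio_bot, prod_empty, mul_add, mul_sum, mul_assoc]
  ring

def chainValues : {n : ℕ} → (Fin n → Set R) → (Fin n → Set R) → Submonoid R
  | 0, _, _ => ⊥
  | _ + 1, J, U => (Submonoid.closure (U 0) ⊔ chainValues (Fin.tail J) (Fin.tail U)).addIdeal
      (Ideal.span (J 0))

theorem mem_chainValues_succ {n : ℕ} {J U : Fin (n + 1) → Set R} {x : R} :
    x ∈ chainValues J U ↔ ∃ u ∈ Submonoid.closure (U 0),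
      ∃ v ∈ chainValues (Fin.tail J) (Fin.tail U), ∃ j ∈ Ideal.span (J 0), u * v + j = x := by
  rw [chainValues, Submonoid.mem_addIdeal]
  constructor
  · rintro ⟨_, hm, j, hj, rfl⟩
    obtain ⟨u, hu, v, hv, rfl⟩ := Submonoid.mem_sup.1 hm
    exact ⟨u, hu, v, hv, j, hj, rfl⟩
  · rintro ⟨u, hu, v, hv, j, hj, rfl⟩
    exact ⟨u * v, Submonoid.mem_sup.2 ⟨u, hu, v, hv, rfl⟩, j, hj, rfl⟩

theorem mem_chainValues_iff {n : ℕ} {J U : Fin n → Set R} {x : R} :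
    x ∈ chainValues J U ↔ ∃ u j : Fin n → R, (∀ i, u i ∈ Submonoid.closure (U i)) ∧
      (∀ i, j i ∈ Ideal.span (J i)) ∧ chainValue u j = x := by
  induction n generalizing x with
  | zero => simp [chainValues, chainValue_zero, eq_comm]
  | succ n ih =>
    rw [mem_chainValues_succ]
    constructor
    · rintro ⟨a, ha, v, hv, b, hb, rfl⟩
      obtain ⟨u, j, hu, hj, rfl⟩ := ih.1 hv
      refine ⟨Fin.cons a u, Fin.cons b j, Fin.forall_fin_succ.2 ⟨ha, hu⟩,
        Fin.forall_fin_succ.2 ⟨hb, hj⟩, ?_⟩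
      simp [chainValue_succ]
    · rintro ⟨u, j, hu, hj, rfl⟩
      exact ⟨u 0, hu 0, _, ih.2 ⟨_, _, fun i ↦ hu i.succ, fun i ↦ hj i.succ, rfl⟩, j 0, hj 0,
        (chainValue_succ u j).symm⟩

structure IsPrimeChain {n : ℕ} (J U : Fin n → Set R) (P : Fin n → Ideal R) : Prop where
  monotone : Monotone P
  isPrime : ∀ i, (P i).IsPrime
  subset : ∀ i, J i ⊆ P i
  disjoint : ∀ i, Disjoint (U i) (P i)

namespace IsPrimeChain

variable {n : ℕ} {J U : Fin (n + 1) → Set R} {P : Fin (n + 1) → Ideal R}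

theorem tail (hP : IsPrimeChain J U P) :
    IsPrimeChain (Fin.tail J) (Fin.tail U) (Fin.tail P) :=
  ⟨hP.monotone.comp (Fin.strictMono_succ.monotone), fun i ↦ hP.isPrime i.succ,
    fun i ↦ hP.subset i.succ, fun i ↦ hP.disjoint i.succ⟩

theorem cons {J U : Fin n → Set R} {P : Fin n → Ideal R} (hP : IsPrimeChain J U P)
    {A B : Set R} {p : Ideal R} (hp : p.IsPrime) (hA : A ⊆ p) (hB : Disjoint B p)
    (hpP : ∀ i, p ≤ P i) :
    IsPrimeChain (Fin.cons A J) (Fin.cons B U) (Fin.cons p P : Fin (n + 1) → Ideal R) :=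
  ⟨Fin.monotone_cons hpP hP.monotone, Fin.cases hp hP.isPrime, Fin.cases hA hP.subset,
    Fin.cases hB hP.disjoint⟩

end IsPrimeChain

theorem IsPrimeChain.disjoint_chainValues {n : ℕ} {J U : Fin n → Set R} {P : Fin n → Ideal R}
    (hP : IsPrimeChain J U P) {Q : Ideal R} (hQ : Q ≠ ⊤) (hQP : ∀ i, Q ≤ P i) :
    Disjoint (Q : Set R) (chainValues J U) := by
  induction n generalizing Q with
  | zero => simpa [chainValues, Ideal.ne_top_iff_one] using hQ
  | succ n ih =>
    have hP0 : (P 0).IsPrime := hP.isPrime 0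
    have hTail : Disjoint (P 0 : Set R) (chainValues (Fin.tail J) (Fin.tail U)) :=
      ih hP.tail hP0.ne_top fun i ↦ hP.monotone (Fin.zero_le _)
    have hU : Submonoid.closure (U 0) ≤ (P 0).primeCompl :=
      Submonoid.closure_le.2 fun _ hy ↦ Set.disjoint_left.1 (hP.disjoint 0) hy
    refine Set.disjoint_right.2 fun x hx hxQ ↦ ?_
    obtain ⟨u, hu, v, hv, j, hj, rfl⟩ := mem_chainValues_succ.1 hx
    have hj : j ∈ P 0 := Ideal.span_le.2 (hP.subset 0) hj
    have huv : u * v ∈ P 0 := by simpa using sub_mem (hQP 0 hxQ) hj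
    rcases hP0.mem_or_mem huv with hu' | hv'
    · exact hU hu hu'
    · exact Set.disjoint_left.1 hTail hv' hv

theorem exists_isPrimeChain_of_disjoint_chainValues {n : ℕ} {J U : Fin n → Set R} {Q : Ideal R}
    (h : Disjoint (Q : Set R) (chainValues J U)) :
    ∃ P : Fin n → Ideal R, IsPrimeChain J U P ∧ ∀ i, Q ≤ P i := by
  induction n generalizing Q with
  | zero => exact ⟨isEmptyElim, ⟨fun i ↦ isEmptyElim i, isEmptyElim, isEmptyElim, isEmptyElim⟩,
    isEmptyElim⟩
  | succ n ih =>
    have hM : Disjoint ((Q ⊔ Ideal.span (J 0) : Ideal R) : Set R)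
        (Submonoid.closure (U 0) ⊔ chainValues (Fin.tail J) (Fin.tail U) : Submonoid R) := by
      refine Set.disjoint_left.2 fun x hxI hxM ↦ ?_
      obtain ⟨q, hq, j, hj, rfl⟩ := Submodule.mem_sup.1 hxI
      obtain ⟨u, hu, v, hv, huv⟩ := Submonoid.mem_sup.1 hxM
      refine Set.disjoint_left.1 h (?_ : u * v + -j ∈ Q)
        (mem_chainValues_succ.2 ⟨u, hu, v, hv, -j, neg_mem hj, rfl⟩)
      simpa [huv] using hq
    obtain ⟨p, hp, hQJp, hpM⟩ := Ideal.exists_le_prime_disjoint _ _ hM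
    obtain ⟨P, hP, hpP⟩ := ih (hpM.mono_right fun _ ↦ Submonoid.mem_sup_right)
    refine ⟨Fin.cons p P, ?_, Fin.cases (le_sup_left.trans hQJp)
      fun i ↦ (le_sup_left.trans hQJp).trans (hpP i)⟩
    rw [← Fin.cons_self_tail J, ← Fin.cons_self_tail U]
    exact hP.cons hp (fun _ hx ↦ hQJp (Ideal.mem_sup_right (Ideal.subset_span hx)))
      (hpM.mono_right fun _ hx ↦ Submonoid.mem_sup_left (Submonoid.subset_closure hx)).symm hpP

end

theorem stmt_3 {R : Type*} [CommRing R] {ℓ : ℕ} (J U : Fin (ℓ + 1) → Set R) :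
    (∃ P : Fin (ℓ + 1) → Ideal R, Monotone P ∧ (∀ i, (P i).IsPrime) ∧
      (∀ i, J i ⊆ ↑(P i)) ∧ (∀ i, U i ∩ ↑(P i) = ∅)) ↔
    (∀ u j : Fin (ℓ + 1) → R,
      (∀ i, u i ∈ Submonoid.closure (U i)) →
      (∀ i, j i ∈ Ideal.span (J i)) →
      (∏ i, u i) + ∑ i, (∏ k ∈ Finset.Iio i, u k) * j i ≠ 0) := by
  simp only [← Set.disjoint_iff_inter_eq_empty]
  constructor
  · rintro ⟨P, hmono, hprime, hJ, hU⟩ u j hu hj hzero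
    have hP : IsPrimeChain J U P := ⟨hmono, hprime, hJ, hU⟩
    refine Set.disjoint_left.1 (hP.disjoint_chainValues (hprime 0).ne_top
      fun i ↦ hmono (Fin.zero_le i)) (P 0).zero_mem ?_
    exact mem_chainValues_iff.2 ⟨u, j, hu, hj, hzero⟩
  · intro h
    have h0 : Disjoint ((⊥ : Ideal R) : Set R) (chainValues J U) := by
      rw [Submodule.bot_coe, Set.disjoint_singleton_left, SetLike.mem_coe, mem_chainValues_iff]
      rintro ⟨u, j, hu, hj, hzero⟩
      exact h u j hu hj hzero
    obtain ⟨P, hP, -⟩ := exists_isPrimeChain_of_disjoint_chainValues h0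
    exact ⟨P, hP.monotone, hP.isPrime, hP.subset, hP.disjoint⟩
end

section
/- Every regular sequence is pseudo regular. Let R be a commutative ring and (x₁,…,x_ℓ) a regular sequence in R (each x_i is a nonzerodivisor on R/(x₁,…,x_{i−1}) and the ideal (x₁,…,x_ℓ) is proper). Then (x₁,…,x_ℓ) is pseudo regular, i.e. it is not pseudo singular. -/
/-- The sequence `x 0, …, x (ℓ-1)` is pseudo singular: there exist `a i` and `m i` with
`x 1 ^ m 1 * (x 2 ^ m 2 * (⋯ (x ℓ ^ m ℓ * (1 + a ℓ * x ℓ) + ⋯) + a 2 * x 2) + a 1 * x 1) = 0`,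
written in expanded form as `∏ i, x i ^ m i + ∑ i, (∏ k ≤ i, x k ^ m k) * (a i * x i) = 0`. -/
def IsPseudoSingular {R : Type*} [CommRing R] {ℓ : ℕ} (x : Fin ℓ → R) : Prop :=
  ∃ a : Fin ℓ → R, ∃ m : Fin ℓ → ℕ,
    (∏ i, x i ^ m i) + ∑ i, (∏ k ∈ Finset.Iic i, x k ^ m k) * (a i * x i) = 0

theorem stmt_4 {R : Type*} [CommRing R] {ℓ : ℕ} (x : Fin ℓ → R)
    (hreg : ∀ i : Fin ℓ, ∀ r : R,
      r * x i ∈ Ideal.span (x '' {k | k < i}) → r ∈ Ideal.span (x '' {k | k < i}))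
    (hproper : Ideal.span (Set.range x) ≠ ⊤) :
    ¬ IsPseudoSingular x := by
  rintro ⟨a, m, heq⟩
  set I : ℕ → Ideal R := fun j => Ideal.span (x '' {k : Fin ℓ | (k : ℕ) < j}) with hI
  have hIdef : ∀ i : Fin ℓ, I (i : ℕ) = Ideal.span (x '' {k | k < i}) := by
    intro i
    rfl
  -- powers of a regular element are regular
  have hregpow : ∀ i : Fin ℓ, ∀ n : ℕ, ∀ r : R,
      r * x i ^ n ∈ I (i : ℕ) → r ∈ I (i : ℕ) := by
    intro i n
    induction n with
    | zero => intro r h; simpa using h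
    | succ n ih =>
      intro r h
      apply ih
      rw [hIdef]
      apply hreg i
      rw [← hIdef]
      convert h using 1
      ring
  -- the nested partial expressions
  set E : ℕ → R := fun j =>
    (∏ i ∈ Finset.univ.filter (fun i : Fin ℓ => j ≤ (i : ℕ)), x i ^ m i) +
    ∑ i ∈ Finset.univ.filter (fun i : Fin ℓ => j ≤ (i : ℕ)),
      (∏ k ∈ (Finset.Iic i).filter (fun k : Fin ℓ => j ≤ (k : ℕ)), x k ^ m k) * (a i * x i) with hE
  have hEtop : E ℓ = 1 := by
    have hempty : Finset.univ.filter (fun i : Fin ℓ => ℓ ≤ (i : ℕ)) = ∅ := by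
      ext i
      simp [Nat.not_le.mpr i.isLt]
    simp [hE, hempty]
  -- the recurrence
  have hrec : ∀ j, ∀ hj : j < ℓ,
      E j = x ⟨j, hj⟩ ^ m ⟨j, hj⟩ * (E (j + 1) + a ⟨j, hj⟩ * x ⟨j, hj⟩) := by
    intro j hj
    set i0 : Fin ℓ := ⟨j, hj⟩ with hi0
    have hfil : Finset.univ.filter (fun i : Fin ℓ => j ≤ (i : ℕ)) =
        insert i0 (Finset.univ.filter (fun i : Fin ℓ => j + 1 ≤ (i : ℕ))) := by
      ext i
      simp only [Finset.mem_filter, Finset.mem_insert, Finset.mem_univ, true_and, hi0,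
        Fin.ext_iff]
      omega
    have hnot : i0 ∉ Finset.univ.filter (fun i : Fin ℓ => j + 1 ≤ (i : ℕ)) := by
      simp [hi0]
    have hinner0 : (Finset.Iic i0).filter (fun k : Fin ℓ => j ≤ (k : ℕ)) = {i0} := by
      ext k
      simp only [Finset.mem_filter, Finset.mem_Iic, Finset.mem_singleton, Fin.le_def, hi0,
        Fin.ext_iff]
      omega
    have hinner : ∀ i : Fin ℓ, j + 1 ≤ (i : ℕ) →
        (Finset.Iic i).filter (fun k : Fin ℓ => j ≤ (k : ℕ)) =
          insert i0 ((Finset.Iic i).filter (fun k : Fin ℓ => j + 1 ≤ (k : ℕ))) := by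
      intro i hi
      ext k
      simp only [Finset.mem_filter, Finset.mem_Iic, Finset.mem_insert, Fin.le_def, hi0,
        Fin.ext_iff]
      omega
    have hnot' : ∀ i : Fin ℓ,
        i0 ∉ (Finset.Iic i).filter (fun k : Fin ℓ => j + 1 ≤ (k : ℕ)) := by
      intro i
      simp [hi0]
    have hsum : ∀ i ∈ Finset.univ.filter (fun i : Fin ℓ => j + 1 ≤ (i : ℕ)),
        (∏ k ∈ (Finset.Iic i).filter (fun k : Fin ℓ => j ≤ (k : ℕ)), x k ^ m k) * (a i * x i) =
        x i0 ^ m i0 *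
          ((∏ k ∈ (Finset.Iic i).filter (fun k : Fin ℓ => j + 1 ≤ (k : ℕ)), x k ^ m k) *
            (a i * x i)) := by
      intro i hi
      rw [hinner i (by simpa using hi), Finset.prod_insert (hnot' i)]
      ring
    simp only [hE]
    rw [hfil, Finset.prod_insert hnot, Finset.sum_insert hnot, hinner0,
      Finset.sum_congr rfl hsum, ← Finset.mul_sum, Finset.prod_singleton]
    ring
  -- downward induction
  have key : ∀ d j, j + d = ℓ → E j ∈ I j → (1 : R) ∈ I ℓ := by
    intro d
    induction d with
    | zero =>
      intro j hj hEj
      have : j = ℓ := by omega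
      subst this
      rwa [hEtop] at hEj
    | succ d ih =>
      intro j hj hEj
      have hjℓ : j < ℓ := by omega
      set i0 : Fin ℓ := ⟨j, hjℓ⟩ with hi0
      rw [hrec j hjℓ] at hEj
      have h1 : E (j + 1) + a i0 * x i0 ∈ I j := by
        have := hregpow i0 (m i0) (E (j + 1) + a i0 * x i0) (by
          rw [mul_comm] at hEj
          exact hEj)
        exact this
      have hmono : I j ≤ I (j + 1) := by
        apply Ideal.span_mono
        apply Set.image_mono
        intro k hk
        exact Nat.lt_succ_of_lt hk
      have hx : x i0 ∈ I (j + 1) := by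
        apply Ideal.subset_span
        exact ⟨i0, by simp [hi0], rfl⟩
      have hE1 : E (j + 1) ∈ I (j + 1) := by
        have h2 : a i0 * x i0 ∈ I (j + 1) := Ideal.mul_mem_left _ _ hx
        have h3 := (I (j + 1)).sub_mem (hmono h1) h2
        simpa using h3
      exact ih (j + 1) (by omega) hE1
  -- E 0 = 0
  have hE0 : E 0 = 0 := by
    have hf1 : Finset.univ.filter (fun i : Fin ℓ => 0 ≤ (i : ℕ)) = Finset.univ := by
      simp
    have hf2 : ∀ i : Fin ℓ,
        (Finset.Iic i).filter (fun k : Fin ℓ => 0 ≤ (k : ℕ)) = Finset.Iic i := by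
      intro i; simp
    simp only [hE, hf1]
    rw [Finset.sum_congr rfl (fun i _ => by rw [hf2 i])]
    exact heq
  have hone : (1 : R) ∈ I ℓ := key ℓ 0 (by omega) (by rw [hE0]; exact zero_mem _)
  apply hproper
  rw [Ideal.eq_top_iff_one]
  have hIℓ : I ℓ = Ideal.span (Set.range x) := by
    simp only [hI]
    congr 1
    have : {k : Fin ℓ | (k : ℕ) < ℓ} = Set.univ := by
      ext k; simp [k.isLt]
    rw [this, Set.image_univ]
  rwa [hIℓ] at hone
end

section
/- Pseudo regular sequences and increasing chains of prime ideals. Let R be a commutative ring. A sequence (x₁,…,x_ℓ) in R is pseudo regular if and only if there exist prime ideals P₀ ⊆ P₁ ⊆ ⋯ ⊆ P_ℓ of R such that x_i ∈ P_i and x_i ∉ P_{i−1} for every i = 1,…,ℓ. -/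
section Aux

variable {R : Type*} [CommRing R]

open Finset

/-- The Krull boundary monoid of `y` over a submonoid `S`. -/
def bdry (y : R) (S : Submonoid R) : Submonoid R where
  carrier := {r | ∃ m : ℕ, ∃ a : R, ∃ v ∈ S, r = y ^ m * (v + a * y)}
  one_mem' := ⟨0, 0, 1, S.one_mem, by ring⟩
  mul_mem' := by
    rintro r r' ⟨m, a, v, hv, rfl⟩ ⟨m', a', v', hv', rfl⟩
    exact ⟨m + m', a * v' + a' * v + a * a' * y, v * v', S.mul_mem hv hv', by ring⟩

/-- Iterated boundary monoid of a list. -/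
def Vm : List R → Submonoid R
  | [] => ⊥
  | y :: l => bdry y (Vm l)

lemma Iic_succ_fin {ℓ : ℕ} (i : Fin ℓ) :
    Finset.Iic i.succ = insert 0 ((Finset.Iic i).map (Fin.succEmb ℓ)) := by
  ext k
  simp only [mem_Iic, mem_insert, mem_map, Fin.succEmb, Function.Embedding.coeFn_mk]
  constructor
  · intro h
    rcases Fin.eq_zero_or_eq_succ k with rfl | ⟨k', rfl⟩
    · exact Or.inl rfl
    · exact Or.inr ⟨k', by simpa [Fin.succ_le_succ_iff] using h, rfl⟩
  · rintro (rfl | ⟨k', hk', rfl⟩)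
    · exact Fin.zero_le _
    · simpa [Fin.succ_le_succ_iff] using hk'

lemma prod_Iic_succ_fin {ℓ : ℕ} (i : Fin ℓ) (f : Fin (ℓ + 1) → R) :
    ∏ k ∈ Finset.Iic i.succ, f k = f 0 * ∏ k ∈ Finset.Iic i, f k.succ := by
  rw [Iic_succ_fin, Finset.prod_insert (by simp [Fin.succEmb, Fin.succ_ne_zero]),
    Finset.prod_map]
  rfl

lemma Iic_zero_fin (ℓ : ℕ) : Finset.Iic (0 : Fin (ℓ + 1)) = {0} := by
  ext k; simp [Fin.le_zero_iff]

/-- The formula for a sequence of length `ℓ+1` in terms of its tail. -/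
lemma F_cons {ℓ : ℕ} (x : Fin (ℓ + 1) → R) (m : Fin (ℓ + 1) → ℕ) (a : Fin (ℓ + 1) → R) :
    (∏ i, x i ^ m i) + ∑ i, (∏ k ∈ Finset.Iic i, x k ^ m k) * (a i * x i)
      = x 0 ^ m 0 * ((((∏ i : Fin ℓ, x i.succ ^ m i.succ) +
          ∑ i : Fin ℓ, (∏ k ∈ Finset.Iic i, x k.succ ^ m k.succ) * (a i.succ * x i.succ))) +
          a 0 * x 0) := by
  rw [Fin.prod_univ_succ, Fin.sum_univ_succ, Iic_zero_fin]
  have h : ∀ i : Fin ℓ, (∏ k ∈ Finset.Iic i.succ, x k ^ m k) * (a i.succ * x i.succ)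
      = x 0 ^ m 0 * ((∏ k ∈ Finset.Iic i, x k.succ ^ m k.succ) * (a i.succ * x i.succ)) := by
    intro i
    rw [prod_Iic_succ_fin i (fun k => x k ^ m k), mul_assoc]
  rw [Finset.sum_congr rfl fun i _ => h i, ← Finset.mul_sum, Finset.prod_singleton]
  ring

lemma mem_Vm_iff : ∀ {ℓ : ℕ} (x : Fin ℓ → R) (r : R),
    r ∈ Vm (List.ofFn x) ↔ ∃ (m : Fin ℓ → ℕ) (a : Fin ℓ → R),
      r = (∏ i, x i ^ m i) + ∑ i, (∏ k ∈ Finset.Iic i, x k ^ m k) * (a i * x i) := by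
  intro ℓ
  induction ℓ with
  | zero =>
    intro x r
    simp only [List.ofFn_zero, Vm, Submonoid.mem_bot, Finset.univ_eq_empty,
      Finset.prod_empty, Finset.sum_empty, add_zero]
    exact ⟨fun h => ⟨Fin.elim0, Fin.elim0, h⟩, fun ⟨_, _, h⟩ => h⟩
  | succ ℓ ih =>
    intro x r
    rw [List.ofFn_succ]
    show (∃ m₀ : ℕ, ∃ a₀ : R, ∃ v ∈ Vm (List.ofFn fun i => x i.succ),
      r = x 0 ^ m₀ * (v + a₀ * x 0)) ↔ _
    constructor
    · rintro ⟨m₀, a₀, v, hv, rfl⟩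
      obtain ⟨m', a', rfl⟩ := (ih _ v).mp hv
      refine ⟨Fin.cons m₀ m', Fin.cons a₀ a', ?_⟩
      rw [F_cons]
      simp only [Fin.cons_zero, Fin.cons_succ]
    · rintro ⟨m, a, rfl⟩
      refine ⟨m 0, a 0, (∏ i : Fin ℓ, x i.succ ^ m i.succ) +
        ∑ i : Fin ℓ, (∏ k ∈ Finset.Iic i, x k.succ ^ m k.succ) * (a i.succ * x i.succ),
        (ih _ _).mpr ⟨fun i => m i.succ, fun i => a i.succ, rfl⟩, F_cons x m a⟩

variable {ℓ : ℕ} (x : Fin ℓ → R)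

lemma drop_ofFn_eq {n : ℕ} (h : n < ℓ) :
    (List.ofFn x).drop n = x ⟨n, h⟩ :: (List.ofFn x).drop (n + 1) := by
  rw [List.drop_eq_getElem_cons (by simpa using h)]
  simp

lemma drop_ofFn_nil {n : ℕ} (h : ℓ ≤ n) : (List.ofFn x).drop n = [] := by
  apply List.drop_eq_nil_of_le
  simpa using h

lemma self_mem_Vm_drop {n : ℕ} (h : n < ℓ) :
    x ⟨n, h⟩ ∈ Vm ((List.ofFn x).drop n) := by
  rw [drop_ofFn_eq x h]
  exact ⟨1, 0, 1, Submonoid.one_mem _, by ring⟩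

lemma step_lemma (n : ℕ) (P : Ideal R) (hP : P.IsPrime)
    (hd : Disjoint (P : Set R) (Vm ((List.ofFn x).drop n))) :
    ∃ Q : Ideal R, Q.IsPrime ∧ P ≤ Q ∧ (∀ h : n < ℓ, x ⟨n, h⟩ ∈ Q) ∧
      Disjoint (Q : Set R) (Vm ((List.ofFn x).drop (n + 1))) := by
  by_cases h : n < ℓ
  · set y := x ⟨n, h⟩ with hy
    have hdisj : Disjoint ((P ⊔ Ideal.span {y} : Ideal R) : Set R)
        (Vm ((List.ofFn x).drop (n + 1))) := by
      rw [Set.disjoint_left]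
      rintro v hv hv'
      obtain ⟨p, hp, z, hz, rfl⟩ := Submodule.mem_sup.mp hv
      obtain ⟨c, rfl⟩ := Ideal.mem_span_singleton'.mp hz
      have h1 : y * (p + c * y + -c * y) ∈ P := by
        have : p + c * y + -c * y = p := by ring
        rw [this]
        exact P.mul_mem_left _ hp
      have h2 : y * (p + c * y + -c * y) ∈ Vm ((List.ofFn x).drop n) := by
        rw [drop_ofFn_eq x h]
        exact ⟨1, -c, p + c * y, hv', by ring⟩
      exact Set.disjoint_left.mp hd h1 h2
    obtain ⟨Q, hQp, hle, hQd⟩ := Ideal.exists_le_prime_disjoint _ _ hdisj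
    refine ⟨Q, hQp, le_sup_left.trans hle, fun _ => ?_, hQd⟩
    exact hle (Submodule.mem_sup_right (Ideal.mem_span_singleton_self y))
  · refine ⟨P, hP, le_rfl, fun hc => absurd hc h, ?_⟩
    rwa [drop_ofFn_nil x (by omega), ← drop_ofFn_nil x (le_of_not_gt h)]


lemma chain_lemma (hreg : (0 : R) ∉ Vm (List.ofFn x)) :
    ∀ n : ℕ, ∃ P : ℕ → Ideal R, (∀ i ≤ n, (P i).IsPrime) ∧ (∀ i < n, P i ≤ P (i + 1)) ∧
      (∀ i < n, ∀ h : i < ℓ, x ⟨i, h⟩ ∈ P (i + 1) ∧ x ⟨i, h⟩ ∉ P i) ∧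
      Disjoint ((P n : Set R)) (Vm ((List.ofFn x).drop n)) := by
  intro n
  induction n with
  | zero =>
    have hd : Disjoint ((⊥ : Ideal R) : Set R) ((Vm (List.ofFn x) : Submonoid R) : Set R) := by
      rw [Set.disjoint_left]
      intro r hr
      simp only [Submodule.bot_coe, Set.mem_singleton_iff] at hr
      subst hr
      exact fun hc => hreg hc
    obtain ⟨P0, hP0p, _, hP0d⟩ := Ideal.exists_le_prime_disjoint _ _ hd
    exact ⟨fun _ => P0, fun _ _ => hP0p, fun i hi => absurd hi (Nat.not_lt_zero i),
      fun i hi => absurd hi (Nat.not_lt_zero i), by simpa using hP0d⟩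
  | succ n ih =>
    obtain ⟨P, hprime, hchain, hx, hdisj⟩ := ih
    obtain ⟨Q, hQp, hPQ, hxQ, hQd⟩ := step_lemma x n (P n) (hprime n le_rfl) hdisj
    refine ⟨fun i => if i ≤ n then P i else Q, ?_, ?_, ?_, ?_⟩
    · intro i hi
      by_cases hc : i ≤ n
      · simpa [hc] using hprime i hc
      · simpa [hc] using hQp
    · intro i hi
      rcases Nat.lt_succ_iff_lt_or_eq.mp hi with h' | rfl
      · have h1 : i ≤ n := le_of_lt h'
        have h2 : i + 1 ≤ n := h'
        simpa [h1, h2] using hchain i h'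
      · have hn1 : ¬ (i + 1 ≤ i) := by omega
        simpa [hn1] using hPQ
    · intro i hi h
      rcases Nat.lt_succ_iff_lt_or_eq.mp hi with h' | rfl
      · have h1 : i ≤ n := le_of_lt h'
        have h2 : i + 1 ≤ n := h'
        simpa [h1, h2] using hx i h' h
      · have hn1 : ¬ (i + 1 ≤ i) := by omega
        constructor
        · simpa [hn1] using hxQ h
        · simp only [le_refl, if_pos]
          exact fun hc => Set.disjoint_left.mp hdisj hc (self_mem_Vm_drop x h)
    · have hn1 : ¬ (n + 1 ≤ n) := by omega
      simpa [hn1] using hQd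

lemma Vm_notMem_of_chain (P : Fin (ℓ + 1) → Ideal R) (hmono : Monotone P)
    (hprime : ∀ i, (P i).IsPrime)
    (hx : ∀ i : Fin ℓ, x i ∈ P i.succ ∧ x i ∉ P i.castSucc) :
    ∀ d n (hn : n + d = ℓ), ∀ r ∈ Vm ((List.ofFn x).drop n), r ∉ P ⟨n, by omega⟩ := by
  intro d
  induction d with
  | zero =>
    intro n hn r hr
    rw [drop_ofFn_nil x (by omega)] at hr
    simp only [Vm, Submonoid.mem_bot] at hr
    subst hr
    exact fun hc => (hprime _).ne_top ((Ideal.eq_top_iff_one _).mpr hc)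
  | succ d ih =>
    intro n hn r hr
    have h : n < ℓ := by omega
    rw [drop_ofFn_eq x h] at hr
    obtain ⟨m, a, v, hv, rfl⟩ := hr
    intro hc
    have hvP : v ∉ P ⟨n + 1, by omega⟩ := ih (n + 1) (by omega) v hv
    rcases (hprime ⟨n, by omega⟩).mem_or_mem hc with h1 | h2
    · exact (hx ⟨n, h⟩).2 ((hprime _).mem_of_pow_mem _ h1)
    · have hle : P ⟨n, by omega⟩ ≤ P ⟨n + 1, by omega⟩ := hmono (by simp [Fin.mk_le_mk])
      have h3 : v + a * x ⟨n, h⟩ ∈ P ⟨n + 1, by omega⟩ := hle h2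
      have h4 : x ⟨n, h⟩ ∈ P ⟨n + 1, by omega⟩ := (hx ⟨n, h⟩).1
      have h5 : v ∈ P ⟨n + 1, by omega⟩ := by
        have : v = (v + a * x ⟨n, h⟩) - a * x ⟨n, h⟩ := by ring
        rw [this]
        exact Submodule.sub_mem _ h3 (Ideal.mul_mem_left _ _ h4)
      exact hvP h5

end Aux

theorem stmt_5 {R : Type*} [CommRing R] {ℓ : ℕ} (x : Fin ℓ → R) :
    ¬ IsPseudoSingular x ↔
    ∃ P : Fin (ℓ + 1) → Ideal R, Monotone P ∧ (∀ i, (P i).IsPrime) ∧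
      ∀ i : Fin ℓ, x i ∈ P i.succ ∧ x i ∉ P i.castSucc := by
  constructor
  · intro hreg
    have h0 : (0 : R) ∉ Vm (List.ofFn x) := by
      intro hc
      obtain ⟨m, a, hma⟩ := (mem_Vm_iff x 0).mp hc
      exact hreg ⟨a, m, hma.symm⟩
    obtain ⟨P, hprime, hchain, hx, -⟩ := chain_lemma x h0 ℓ
    have hmono : ∀ j ≤ ℓ, ∀ i ≤ j, P i ≤ P j := by
      intro j
      induction j with
      | zero =>
        intro _ i hi
        obtain rfl : i = 0 := Nat.le_zero.mp hi
        exact le_rfl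
      | succ j ihj =>
        intro hj i hi
        by_cases hij : i ≤ j
        · exact (ihj (by omega) i hij).trans (hchain j (by omega))
        · obtain rfl : i = j + 1 := by omega
          exact le_rfl
    refine ⟨fun i => P i, ?_, fun i => hprime i i.is_le, fun i => ?_⟩
    · intro i j hij
      exact hmono j j.is_le i (Fin.le_def.mp hij)
    · have hi : (i : ℕ) < ℓ := i.isLt
      have hh := hx i hi hi
      exact ⟨hh.1, hh.2⟩
  · rintro ⟨P, hmono, hprime, hx⟩ hsing
    obtain ⟨a, m, hma⟩ := hsing
    have h0 : (0 : R) ∈ Vm (List.ofFn x) := (mem_Vm_iff x 0).mpr ⟨m, a, hma.symm⟩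
    exact Vm_notMem_of_chain x P hmono hprime hx ℓ 0 (by omega) 0
      (by simpa using h0) (Submodule.zero_mem _)
end

section
/- Algebraic-identity characterization of Krull dimension. Let R be a commutative ring and ℓ ≥ 1 an integer. The Krull dimension of R is at most ℓ − 1 if and only if every sequence (x₁,…,x_ℓ) of ℓ elements of R is pseudo singular, i.e. for every x₁,…,x_ℓ ∈ R there exist a₁,…,a_ℓ ∈ R and m₁,…,m_ℓ ∈ ℕ with x₁^{m₁}·(x₂^{m₂}·(⋯(x_ℓ^{m_ℓ}·(1 + a_ℓ x_ℓ) + ⋯) + a₂ x₂) + a₁ x₁) = 0. -/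
/-!
A sequence `x₁, …, x_ℓ` is pseudo singular iff `0` lies in its iterated boundary monoid
`S(x₁, …, x_ℓ) = x₁^ℕ (S(x₂, …, x_ℓ) + x₁ R)`. If it does not, some prime `p₀` avoids this monoid,
and enlarging `p₀` to a prime containing `p₀ + (x₁)` but avoiding `S(x₂, …, x_ℓ)`, and so on,
yields a chain `p₀ < ⋯ < p_ℓ`. Conversely, given such a chain, pick `x_i ∈ p_i \ p_{i-1}`: a
vanishing nested expression lies in `p₀`, and cancelling `x_i^{m_i}` in `p_{i-1}` and absorbing
`a_i x_i` into `p_i` at each level finally puts `1` into `p_ℓ`.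
-/

open Finset

theorem Fin.prod_Iic_succ {M : Type*} [CommMonoid M] {n : ℕ} (f : Fin (n + 1) → M) (i : Fin n) :
    ∏ k ∈ Iic i.succ, f k = f 0 * ∏ k ∈ Iic i, f k.succ := by
  rw [← Icc_bot, bot_eq_zero, Icc_eq_cons_Ioc (Fin.zero_le _), Finset.prod_cons,
    ← Fin.map_succEmb_Iic, prod_map]
  rfl

theorem Fin.Iic_zero {n : ℕ} : Iic (0 : Fin (n + 1)) = {0} := Iic_bot

theorem WithBot.le_natCast_sub_one_iff_lt {a : WithBot ℕ∞} {n : ℕ} (hn : 1 ≤ n) :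
    a ≤ ((n - 1 : ℕ) : WithBot ℕ∞) ↔ a < n := by
  obtain ⟨n, rfl⟩ := Nat.exists_eq_add_of_le' hn
  induction a using WithBot.recBotCoe with
  | bot => simp
  | coe a =>
    rw [Nat.add_sub_cancel]
    norm_cast
    exact (ENat.lt_natCast_add_one_iff ..).symm

section

variable {R : Type*} [CommRing R]

/-- The nested expression `x₁^{m₁}(x₂^{m₂}(⋯ x_ℓ^{m_ℓ}(1 + a_ℓ x_ℓ) ⋯) + a₁ x₁)`, with `x₁ = x 0`. -/
def pseudoSingularExpr : {ℓ : ℕ} → (Fin ℓ → R) → (Fin ℓ → R) → (Fin ℓ → ℕ) → R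
  | 0, _, _, _ => 1
  | _ + 1, x, a, m =>
    x 0 ^ m 0 * (pseudoSingularExpr (Fin.tail x) (Fin.tail a) (Fin.tail m) + a 0 * x 0)

theorem pseudoSingularExpr_eq {ℓ : ℕ} (x a : Fin ℓ → R) (m : Fin ℓ → ℕ) :
    pseudoSingularExpr x a m =
      (∏ i, x i ^ m i) + ∑ i, (∏ k ∈ Iic i, x k ^ m k) * (a i * x i) := by
  induction ℓ with
  | zero => simp [pseudoSingularExpr]
  | succ n ih =>
    simp only [pseudoSingularExpr, ih, Fin.tail, Fin.prod_univ_succ, Fin.sum_univ_succ,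
      Fin.prod_Iic_succ (fun k => x k ^ m k), Fin.Iic_zero, prod_singleton]
    simp only [mul_assoc, ← mul_sum]
    ring

theorem isPseudoSingular_iff {ℓ : ℕ} (x : Fin ℓ → R) :
    IsPseudoSingular x ↔ ∃ a m, pseudoSingularExpr x a m = 0 := by
  simp only [IsPseudoSingular, pseudoSingularExpr_eq]

def boundaryMonoid (x : R) (M : Submonoid R) : Submonoid R where
  carrier := {z | ∃ m : ℕ, ∃ s ∈ M, ∃ a : R, z = x ^ m * (s + a * x)}
  one_mem' := ⟨0, 1, M.one_mem, 0, by ring⟩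
  mul_mem' := by
    rintro _ _ ⟨m, s, hs, a, rfl⟩ ⟨n, t, ht, b, rfl⟩
    exact ⟨m + n, s * t, M.mul_mem hs ht, s * b + t * a + a * b * x, by ring⟩

theorem mem_boundaryMonoid {x z : R} {M : Submonoid R} :
    z ∈ boundaryMonoid x M ↔ ∃ m : ℕ, ∃ s ∈ M, ∃ a : R, z = x ^ m * (s + a * x) :=
  Iff.rfl

theorem self_mem_boundaryMonoid (x : R) (M : Submonoid R) : x ∈ boundaryMonoid x M :=
  ⟨1, 1, M.one_mem, 0, by ring⟩

theorem exists_isPrime_gt_disjoint {x : R} {M : Submonoid R} {I : Ideal R}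
    (hI : Disjoint (I : Set R) (boundaryMonoid x M)) :
    ∃ q : Ideal R, q.IsPrime ∧ I < q ∧ Disjoint (q : Set R) M := by
  have hdisj : Disjoint ((I ⊔ Ideal.span {x} : Ideal R) : Set R) M := by
    refine Set.disjoint_left.mpr fun u hu huM => ?_
    obtain ⟨y, hy, _, hz, rfl⟩ := Submodule.mem_sup.mp hu
    obtain ⟨r, rfl⟩ := Ideal.mem_span_singleton'.mp hz
    have hxy : x * y = x ^ 1 * ((y + r * x) + -r * x) := by ring
    exact Set.disjoint_left.mp hI (hxy ▸ I.mul_mem_left x hy) ⟨1, _, huM, -r, rfl⟩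
  obtain ⟨q, hq, hle, hqM⟩ := Ideal.exists_le_prime_disjoint _ M hdisj
  refine ⟨q, hq, SetLike.lt_iff_le_and_exists.mpr ⟨le_sup_left.trans hle, x, ?_, ?_⟩, hqM⟩
  · exact hle (Ideal.mem_sup_right (Ideal.mem_span_singleton_self x))
  · exact fun hx => Set.disjoint_left.mp hI hx (self_mem_boundaryMonoid x M)

def iterBoundaryMonoid : {ℓ : ℕ} → (Fin ℓ → R) → Submonoid R
  | 0, _ => ⊥
  | _ + 1, x => boundaryMonoid (x 0) (iterBoundaryMonoid (Fin.tail x))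

theorem mem_iterBoundaryMonoid {ℓ : ℕ} (x : Fin ℓ → R) {z : R} :
    z ∈ iterBoundaryMonoid x ↔ ∃ a m, pseudoSingularExpr x a m = z := by
  induction ℓ generalizing z with
  | zero => simp [iterBoundaryMonoid, pseudoSingularExpr, eq_comm]
  | succ n ih =>
    simp only [iterBoundaryMonoid, mem_boundaryMonoid, ih]
    constructor
    · rintro ⟨m₀, _, ⟨a, m, rfl⟩, a₀, rfl⟩
      exact ⟨Fin.cons a₀ a, Fin.cons m₀ m, by simp [pseudoSingularExpr]⟩
    · rintro ⟨a, m, rfl⟩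
      exact ⟨m 0, _, ⟨Fin.tail a, Fin.tail m, rfl⟩, a 0, rfl⟩

theorem isPseudoSingular_iff_zero_mem {ℓ : ℕ} (x : Fin ℓ → R) :
    IsPseudoSingular x ↔ 0 ∈ iterBoundaryMonoid x := by
  rw [isPseudoSingular_iff, mem_iterBoundaryMonoid]

theorem exists_ltSeries_of_disjoint {ℓ : ℕ} (x : Fin ℓ → R) (p : PrimeSpectrum R)
    (hp : Disjoint (p.asIdeal : Set R) (iterBoundaryMonoid x)) :
    ∃ c : LTSeries (PrimeSpectrum R), c.length = ℓ ∧ c.head = p := by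
  induction ℓ generalizing p with
  | zero => exact ⟨RelSeries.singleton _ p, rfl, rfl⟩
  | succ n ih =>
    obtain ⟨q, hq, hpq, hqM⟩ := exists_isPrime_gt_disjoint hp
    obtain ⟨c, hc, hhead⟩ := ih (Fin.tail x) ⟨q, hq⟩ hqM
    exact ⟨c.cons p (hhead ▸ hpq), by simp [hc], by simp⟩

theorem exists_ltSeries_of_not_isPseudoSingular {ℓ : ℕ} {x : Fin ℓ → R}
    (hx : ¬ IsPseudoSingular x) : ∃ c : LTSeries (PrimeSpectrum R), c.length = ℓ := by
  rw [isPseudoSingular_iff_zero_mem] at hx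
  obtain ⟨p, hp, -, hpM⟩ := Ideal.exists_le_prime_disjoint ⊥ (iterBoundaryMonoid x)
    (by simpa [Set.disjoint_left] using hx)
  obtain ⟨c, hc, -⟩ := exists_ltSeries_of_disjoint x ⟨p, hp⟩ hpM
  exact ⟨c, hc⟩

theorem pseudoSingularExpr_notMem {ℓ : ℕ} (q : Fin (ℓ + 1) → Ideal R)
    (hq : ∀ i, (q i).IsPrime) (hmono : Monotone q) {x : Fin ℓ → R}
    (hx : ∀ i, x i ∈ q i.succ ∧ x i ∉ q i.castSucc) (a : Fin ℓ → R) (m : Fin ℓ → ℕ) :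
    pseudoSingularExpr x a m ∉ q 0 := by
  induction ℓ with
  | zero => exact (Ideal.ne_top_iff_one _).mp (hq 0).ne_top
  | succ n ih =>
    intro h
    obtain ⟨hx₁, hx₀⟩ := hx 0
    simp only [Fin.castSucc_zero] at hx₀
    have hs : pseudoSingularExpr (Fin.tail x) (Fin.tail a) (Fin.tail m) + a 0 * x 0 ∈ q 0 :=
      ((hq 0).mem_or_mem h).resolve_left fun h' => hx₀ ((hq 0).mem_of_pow_mem _ h')
    have hs₁ : pseudoSingularExpr (Fin.tail x) (Fin.tail a) (Fin.tail m) ∈ q 1 := by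
      simpa using (q 1).sub_mem (hmono (Fin.zero_le 1) hs) ((q 1).mul_mem_left (a 0) hx₁)
    exact ih (Fin.tail q) (fun i => hq _) (hmono.comp Fin.strictMono_succ.monotone)
      (fun i => by simpa [Fin.tail, ← Fin.succ_castSucc] using hx i.succ) _ _ hs₁

theorem exists_not_isPseudoSingular (c : LTSeries (PrimeSpectrum R)) :
    ∃ x : Fin c.length → R, ¬ IsPseudoSingular x := by
  choose x hx using fun i =>
    SetLike.exists_of_lt ((PrimeSpectrum.asIdeal_lt_asIdeal _ _).mpr (c.step i))
  refine ⟨x, fun hps => ?_⟩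
  obtain ⟨a, m, h⟩ := (isPseudoSingular_iff x).mp hps
  exact pseudoSingularExpr_notMem (fun i => (c i).asIdeal) (fun i => (c i).isPrime)
    (fun _ _ hij => c.monotone hij) hx a m (h ▸ Ideal.zero_mem _)

theorem exists_ltSeries_iff_exists_not_isPseudoSingular (ℓ : ℕ) :
    (∃ c : LTSeries (PrimeSpectrum R), c.length = ℓ) ↔
      ∃ x : Fin ℓ → R, ¬ IsPseudoSingular x := by
  constructor
  · rintro ⟨c, rfl⟩
    exact exists_not_isPseudoSingular c
  · rintro ⟨x, hx⟩
    exact exists_ltSeries_of_not_isPseudoSingular hx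

end

theorem stmt_6 {R : Type*} [CommRing R] (ℓ : ℕ) (hℓ : 1 ≤ ℓ) :
    ringKrullDim R ≤ ((ℓ - 1 : ℕ) : WithBot ℕ∞) ↔
    ∀ x : Fin ℓ → R, IsPseudoSingular x := by
  rw [WithBot.le_natCast_sub_one_iff_lt hℓ, ← not_le, ringKrullDim, Order.le_krullDim_iff,
    exists_ltSeries_iff_exists_not_isPseudoSingular, not_exists_not]
end

section
/- Algebraically dependent elements form a pseudo singular sequence. Let K be a field, R a commutative K-algebra, and x₁,…,x_ℓ ∈ R algebraically dependent over K, i.e. there exists a nonzero polynomial Q ∈ K[T₁,…,T_ℓ] with Q(x₁,…,x_ℓ) = 0 in R. Then the sequence (x₁,…,x_ℓ) is pseudo singular. -/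
theorem stmt_7 {K R : Type*} [Field K] [CommRing R] [Algebra K R] {ℓ : ℕ}
    (x : Fin ℓ → R) (Q : MvPolynomial (Fin ℓ) K) (hQ : Q ≠ 0)
    (hx : MvPolynomial.aeval x Q = 0) :
    IsPseudoSingular x := by
  classical
  have hs : Q.support.Nonempty := MvPolynomial.support_nonempty.mpr hQ
  obtain ⟨α, hαs, hαmin⟩ := Q.support.exists_min_image (fun β : Fin ℓ →₀ ℕ => toLex β) hs
  have hcα : Q.coeff α ≠ 0 := MvPolynomial.mem_support_iff.mp hαs
  set P : (Fin ℓ →₀ ℕ) → Fin ℓ → Prop := fun β i => (∀ j, j < i → α j = β j) ∧ α i < β i with hP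
  -- existence of differing index for β ∈ erase
  have hex : ∀ β ∈ Q.support.erase α, ∃ i, P β i := by
    intro β hβ
    obtain ⟨hne, hβs⟩ := Finset.mem_erase.mp hβ
    have hle : toLex α ≤ toLex β := hαmin β hβs
    have hne' : toLex α ≠ toLex β := by
      simp only [ne_eq, toLex_inj]
      exact fun h => hne h.symm
    have hlt : toLex α < toLex β := lt_of_le_of_ne hle hne'
    exact hlt
  -- uniqueness
  have huniq : ∀ β, ∀ i i' : Fin ℓ, P β i → P β i' → i = i' := by
    intro β i i' hi hi'
    by_contra h
    rcases lt_or_gt_of_ne h with hlt | hlt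
    · exact absurd (hi'.1 i hlt) (ne_of_lt hi.2)
    · exact absurd (hi.1 i' hlt) (ne_of_lt hi'.2)
  refine ⟨fun i => ∑ β ∈ (Q.support.erase α).filter (fun β => P β i),
      algebraMap K R ((Q.coeff α)⁻¹ * Q.coeff β) *
        (x i ^ (β i - α i - 1) * ∏ k ∈ Finset.Ioi i, x k ^ β k),
    fun i => α i, ?_⟩
  have key : ∀ i : Fin ℓ, ∀ β ∈ (Q.support.erase α).filter (fun β => P β i),
      (∏ k ∈ Finset.Iic i, x k ^ α k) *
        ((algebraMap K R ((Q.coeff α)⁻¹ * Q.coeff β) *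
          (x i ^ (β i - α i - 1) * ∏ k ∈ Finset.Ioi i, x k ^ β k)) * x i) =
      algebraMap K R ((Q.coeff α)⁻¹ * Q.coeff β) * ∏ k, x k ^ β k := by
    intro i β hβ
    obtain ⟨hβe, hPβ⟩ := Finset.mem_filter.mp hβ
    have h1 : (∏ k ∈ Finset.Iic i, x k ^ α k)
        = (∏ k ∈ Finset.Iio i, x k ^ β k) * x i ^ α i := by
      rw [← Finset.Iio_insert i, Finset.prod_insert (by simp), mul_comm]
      congr 1
      exact Finset.prod_congr rfl fun j hj => by rw [hPβ.1 j (Finset.mem_Iio.mp hj)]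
    have hdisj : Disjoint (Finset.Iic i) (Finset.Ioi i) :=
      Finset.disjoint_left.mpr fun a ha hb =>
        absurd (Finset.mem_Iic.mp ha) (not_le.mpr (Finset.mem_Ioi.mp hb))
    have h2 : ((∏ k ∈ Finset.Iio i, x k ^ β k) * x i ^ β i) * ∏ k ∈ Finset.Ioi i, x k ^ β k
        = ∏ k, x k ^ β k := by
      have huniv : Finset.Iic i ∪ Finset.Ioi i = (Finset.univ : Finset (Fin ℓ)) := by
        ext a; simp [le_or_gt]
      rw [← huniv, Finset.prod_union hdisj, ← Finset.Iio_insert i,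
        Finset.prod_insert (by simp)]
      ring
    have h3 : x i ^ α i * (x i ^ (β i - α i - 1) * x i) = x i ^ β i := by
      rw [← pow_succ, ← pow_add]
      congr 1
      omega
    rw [h1, ← h2]
    ring_nf
    rw [← h3]
    ring
  calc (∏ i, x i ^ α i) + ∑ i, (∏ k ∈ Finset.Iic i, x k ^ α k) *
        ((∑ β ∈ (Q.support.erase α).filter (fun β => P β i),
          algebraMap K R ((Q.coeff α)⁻¹ * Q.coeff β) *
            (x i ^ (β i - α i - 1) * ∏ k ∈ Finset.Ioi i, x k ^ β k)) * x i)
      = (∏ i, x i ^ α i) + ∑ i, ∑ β ∈ (Q.support.erase α).filter (fun β => P β i),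
          algebraMap K R ((Q.coeff α)⁻¹ * Q.coeff β) * ∏ k, x k ^ β k := by
        congr 1
        refine Finset.sum_congr rfl fun i _ => ?_
        rw [Finset.sum_mul, Finset.mul_sum]
        exact Finset.sum_congr rfl fun β hβ => key i β hβ
    _ = (∏ i, x i ^ α i) + ∑ β ∈ Q.support.erase α,
          algebraMap K R ((Q.coeff α)⁻¹ * Q.coeff β) * ∏ k, x k ^ β k := by
        congr 1
        simp_rw [Finset.sum_filter]
        rw [Finset.sum_comm]
        refine Finset.sum_congr rfl fun β hβ => ?_
        obtain ⟨i₀, hi₀⟩ := hex β hβ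
        rw [Finset.sum_eq_single i₀]
        · rw [if_pos hi₀]
        · intro b _ hb
          rw [if_neg (fun h => hb (huniq β b i₀ h hi₀))]
        · simp
    _ = ∑ β ∈ Q.support, algebraMap K R ((Q.coeff α)⁻¹ * Q.coeff β) * ∏ k, x k ^ β k := by
        rw [← Finset.add_sum_erase _ _ hαs, inv_mul_cancel₀ hcα, map_one, one_mul]
    _ = algebraMap K R (Q.coeff α)⁻¹ * MvPolynomial.aeval x Q := by
        rw [MvPolynomial.aeval_def, MvPolynomial.eval₂_eq', Finset.mul_sum]
        exact Finset.sum_congr rfl fun β _ => by rw [map_mul, mul_assoc]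
    _ = 0 := by rw [hx, mul_zero]
end

section
/- Local character of Krull dimension with respect to comaximal monoids. Let R be a commutative ring and S₁,…,S_n comaximal submonoids of R. Then for any integer ℓ, the Krull dimension of R is at most ℓ if and only if for each i = 1,…,n the Krull dimension of the localization of R at S_i is at most ℓ. -/
/-!
Localizing never increases Krull dimension, since the height of a prime of `S⁻¹R` equals the
height of its contraction to `R`. Conversely, comaximality forces every proper ideal of `R` to
miss one of the monoids `Sᵢ`: otherwise it would contain some `sᵢ ∈ Sᵢ` for every `i`, hence
`∑ aᵢ sᵢ = 1`. A prime `p` disjoint from `Sᵢ` extends to a prime of `R_{Sᵢ}` of the same height,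
so the heights of all primes of `R` are bounded by the dimensions of the localizations.
-/

section

variable {R : Type*} [CommRing R]

def Submonoid.Comaximal {ι : Type*} [Fintype ι] (S : ι → Submonoid R) : Prop :=
  ∀ s : ι → R, (∀ i, s i ∈ S i) → ∃ a : ι → R, ∑ i, a i * s i = 1

lemma Submonoid.Comaximal.exists_disjoint {ι : Type*} [Fintype ι] {S : ι → Submonoid R}
    (hS : Submonoid.Comaximal S) {I : Ideal R} (hI : I ≠ ⊤) :
    ∃ i, Disjoint (S i : Set R) I := by
  by_contra! hmeet
  choose s hsS hsI using fun i => Set.not_disjoint_iff.mp (hmeet i)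
  obtain ⟨a, ha⟩ := hS s hsS
  exact hI <| (Ideal.eq_top_iff_one I).mpr <|
    ha ▸ Ideal.sum_mem _ fun i _ => I.mul_mem_left (a i) (hsI i)

lemma ringKrullDim_le_of_isLocalization (M : Submonoid R) (A : Type*) [CommRing A] [Algebra R A]
    [IsLocalization M A] : ringKrullDim A ≤ ringKrullDim R := by
  refine (ringKrullDim_le_iff_height_le _).mpr fun J _ => ?_
  rw [← IsLocalization.height_under M J]
  exact Ideal.height_le_ringKrullDim_of_isPrime

lemma height_le_ringKrullDim_of_isLocalization_of_disjoint (M : Submonoid R) (A : Type*)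
    [CommRing A] [Algebra R A] [IsLocalization M A] {p : Ideal R} [p.IsPrime]
    (h : Disjoint (M : Set R) p) : (p.height : WithBot ℕ∞) ≤ ringKrullDim A := by
  have : (p.map (algebraMap R A)).IsPrime :=
    IsLocalization.isPrime_of_isPrime_disjoint M A p ‹_› h
  rw [← IsLocalization.height_map_of_disjoint (S := A) M p h]
  exact Ideal.height_le_ringKrullDim_of_isPrime

theorem ringKrullDim_le_iff_forall_localization_le {ι : Type*} [Fintype ι] {S : ι → Submonoid R}
    (hS : Submonoid.Comaximal S) (d : WithBot ℕ∞) :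
    ringKrullDim R ≤ d ↔ ∀ i, ringKrullDim (Localization (S i)) ≤ d := by
  refine ⟨fun h i => (ringKrullDim_le_of_isLocalization (S i) _).trans h, fun h => ?_⟩
  refine (ringKrullDim_le_iff_height_le d).mpr fun p hp => ?_
  obtain ⟨i, hi⟩ := hS.exists_disjoint hp.ne_top
  exact (height_le_ringKrullDim_of_isLocalization_of_disjoint (S i) _ hi).trans (h i)

end

theorem stmt_9 {R : Type*} [CommRing R] {n : ℕ} (S : Fin n → Submonoid R)
    (hco : ∀ s : Fin n → R, (∀ i, s i ∈ S i) →
      ∃ a : Fin n → R, ∑ i, a i * s i = 1) (ℓ : ℕ) :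
    ringKrullDim R ≤ (ℓ : WithBot ℕ∞) ↔
      ∀ i, ringKrullDim (Localization (S i)) ≤ (ℓ : WithBot ℕ∞) :=
  ringKrullDim_le_iff_forall_localization_le hco ℓ
end

section
/- Birkhoff representation theorem. Let T be a bounded distributive lattice. The map θ : T → Set(Hom(T, Bool)) defined by θ(a) = {φ : T → Bool bounded lattice homomorphism | φ(a) = ⊤} is injective and satisfies θ(a ⊓ b) = θ(a) ∩ θ(b), θ(a ⊔ b) = θ(a) ∪ θ(b), θ(0) = ∅ and θ(1) = Hom(T, Bool); hence every distributive lattice embeds as a lattice of subsets of a set. -/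
open Order
open scoped Classical

/-- From a prime ideal build a bounded lattice hom to `Bool`. -/
noncomputable def primeHom {T : Type*} [DistribLattice T] [BoundedOrder T]
    (J : Order.Ideal T) (hJ : Order.Ideal.IsPrime J) : BoundedLatticeHom T Bool where
  toFun x := if x ∈ J then ⊥ else ⊤
  map_inf' x y := by
    by_cases hx : x ∈ J
    · have h : x ⊓ y ∈ J := J.lower inf_le_left hx
      simp [hx, h]
    by_cases hy : y ∈ J
    · have h : x ⊓ y ∈ J := J.lower inf_le_right hy
      simp [hy, h]
    have : x ⊓ y ∉ J := fun h => by rcases hJ.mem_or_mem h with h | h <;> simp_all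
    simp [hx, hy, this]
  map_sup' x y := by
    by_cases hx : x ∈ J <;> by_cases hy : y ∈ J
    · simp [hx, hy, J.sup_mem hx hy]
    · have : x ⊔ y ∉ J := fun h => hy (J.lower le_sup_right h)
      simp [hx, hy, this]
    · have : x ⊔ y ∉ J := fun h => hx (J.lower le_sup_left h)
      simp [hx, hy, this]
    · have : x ⊔ y ∉ J := fun h => hx (J.lower le_sup_left h)
      simp [hx, hy, this]
  map_top' := by
    have : (⊤ : T) ∉ J := fun h => hJ.toIsProper.ne_univ (J.top_of_top_mem h ▸ rfl)
    simp [this]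
  map_bot' := by simp

lemma sep_hom {T : Type*} [DistribLattice T] [BoundedOrder T] {a b : T} (hab : ¬ a ≤ b) :
    ∃ φ : BoundedLatticeHom T Bool, φ a = ⊤ ∧ φ b = ⊥ := by
  have hdisj : Disjoint ((Order.PFilter.principal a : Order.PFilter T) : Set T)
      ((Order.Ideal.principal b : Order.Ideal T) : Set T) := by
    rw [Set.disjoint_left]
    intro x hx hx'
    exact hab (le_trans hx hx')
  obtain ⟨J, hJp, hIJ, hFJ⟩ := DistribLattice.prime_ideal_of_disjoint_filter_ideal hdisj
  have ha : a ∉ J := fun h => Set.disjoint_left.mp hFJ (le_refl a) h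
  have hb : b ∈ J := hIJ (Order.Ideal.mem_principal.mpr le_rfl)
  exact ⟨primeHom J hJp, by simp [primeHom, ha], by simp [primeHom, hb]⟩

theorem stmt_11 {T : Type*} [DistribLattice T] [BoundedOrder T] :
    Function.Injective (fun a : T => {φ : BoundedLatticeHom T Bool | φ a = ⊤}) ∧
    (∀ a b : T, {φ : BoundedLatticeHom T Bool | φ (a ⊓ b) = ⊤}
      = {φ : BoundedLatticeHom T Bool | φ a = ⊤} ∩ {φ : BoundedLatticeHom T Bool | φ b = ⊤}) ∧
    (∀ a b : T, {φ : BoundedLatticeHom T Bool | φ (a ⊔ b) = ⊤}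
      = {φ : BoundedLatticeHom T Bool | φ a = ⊤} ∪ {φ : BoundedLatticeHom T Bool | φ b = ⊤}) ∧
    {φ : BoundedLatticeHom T Bool | φ ⊥ = ⊤} = ∅ ∧
    {φ : BoundedLatticeHom T Bool | φ ⊤ = ⊤} = Set.univ := by
  refine ⟨?_, ?_, ?_, ?_, ?_⟩
  · intro a b hab
    by_contra hne
    rcases (not_and_or.mp fun h => hne (le_antisymm h.1 h.2)) with h | h
    · obtain ⟨φ, h1, h2⟩ := sep_hom h
      have := Set.ext_iff.mp hab φ
      simp [h1, h2] at this
    · obtain ⟨φ, h1, h2⟩ := sep_hom h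
      have := Set.ext_iff.mp hab φ
      simp [h1, h2] at this
  · intro a b
    ext φ
    simp [map_inf]
  · intro a b
    ext φ
    simp [map_sup]
  · ext φ; simp
  · ext φ; simp
end

section
/- Fundamental theorem of entailment relations. Let S be a set and ⊢ an entailment relation on S, i.e. a relation between finite subsets of S satisfying: (reflexivity) {a} ⊢ {a} for all a ∈ S; (monotonicity) if A ⊢ B then A ∪ A' ⊢ B ∪ B'; (cut) if A ∪ {x} ⊢ B and A ⊢ B ∪ {x} then A ⊢ B. Then there exists a bounded distributive lattice T and a map f : S → T such that for all finite subsets A, B of S: the infimum of f over A is ≤ the supremum of f over B in T if and only if A ⊢ B (where the infimum over the empty set is 1 and the supremum over the empty set is 0). -/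
/-!
Take for `T` the lattice of sets of models of `⊢`, where a model is a set `M ⊆ S` such that
`A ⊆ M` and `A ⊢ B` force `B` to meet `M`, and let `f a` be the set of models containing `a`.
Then `A.inf f ≤ B.sup f` says that every model containing `A` meets `B`, which follows from
`A ⊢ B` by definition. Conversely, if `A ⊬ B` then the pair `(A, B)` is consistent, and Zorn's
lemma extends it to a maximal consistent pair `(P, N)`. Cut forces `P ∪ N = S` and reflexivity
forces `P ∩ N = ∅`, so `P` is a model containing `A` and missing `B`.
-/

structure IsEntailmentRelation {S : Type*} [DecidableEq S] (E : Finset S → Finset S → Prop) :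
    Prop where
  refl : ∀ a : S, E {a} {a}
  mono : ∀ A B A' B' : Finset S, E A B → E (A ∪ A') (B ∪ B')
  cut : ∀ (A B : Finset S) (x : S), E (insert x A) B → E A (insert x B) → E A B

namespace Entailment

variable {S : Type*} (E : Finset S → Finset S → Prop)

def Consistent (p : Set S × Set S) : Prop :=
  ∀ A B : Finset S, ↑A ⊆ p.1 → ↑B ⊆ p.2 → ¬E A B

def IsModel (M : Set S) : Prop :=
  ∀ A B : Finset S, E A B → ↑A ⊆ M → ∃ b ∈ B, b ∈ M

variable {E}

theorem consistent_biUnion_of_isChain {c : Set (Set S × Set S)}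
    (hcons : ∀ p ∈ c, Consistent E p) (hc : IsChain (· ≤ ·) c) (hne : c.Nonempty) :
    Consistent E (⋃ p ∈ c, p.1, ⋃ p ∈ c, p.2) := by
  intro A B hA hB hAB
  have hdir₁ : DirectedOn (fun p q => p.1 ⊆ q.1) c := hc.directedOn.mono fun _ _ h => h.1
  have hdir₂ : DirectedOn (fun p q => p.2 ⊆ q.2) c := hc.directedOn.mono fun _ _ h => h.2
  obtain ⟨p₁, hp₁, hA₁⟩ := hdir₁.exists_mem_subset_of_finset_subset_biUnion hne hA
  obtain ⟨p₂, hp₂, hB₂⟩ := hdir₂.exists_mem_subset_of_finset_subset_biUnion hne hB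
  obtain ⟨p, hp, h₁, h₂⟩ := hc.directedOn p₁ hp₁ p₂ hp₂
  exact hcons p hp A B (hA₁.trans h₁.1) (hB₂.trans h₂.2) hAB

theorem Consistent.exists_maximal {p : Set S × Set S} (hp : Consistent E p) :
    ∃ q, p ≤ q ∧ Maximal (Consistent E) q :=
  zorn_le_nonempty₀ {p | Consistent E p}
    (fun _ hcons hc y hy => ⟨_, consistent_biUnion_of_isChain hcons hc ⟨y, hy⟩,
      fun _ hz => ⟨Set.subset_biUnion_of_mem hz, Set.subset_biUnion_of_mem hz⟩⟩) p hp

end Entailment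

namespace IsEntailmentRelation

open Entailment

variable {S : Type*} [DecidableEq S] {E : Finset S → Finset S → Prop}

theorem weaken (hE : IsEntailmentRelation E) {A B A' B' : Finset S} (h : E A B) (hA : A ⊆ A')
    (hB : B ⊆ B') : E A' B' := by
  simpa [Finset.union_eq_right.2 hA, Finset.union_eq_right.2 hB] using hE.mono A B A' B' h

theorem disjoint_of_consistent (hE : IsEntailmentRelation E) {p : Set S × Set S}
    (hp : Consistent E p) : Disjoint p.1 p.2 :=
  Set.disjoint_left.2 fun a h₁ h₂ => hp {a} {a} (by simpa) (by simpa) (hE.refl a)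

theorem mem_or_mem_of_maximal (hE : IsEntailmentRelation E) {q : Set S × Set S}
    (hq : Maximal (Consistent E) q) (x : S) : x ∈ q.1 ∨ x ∈ q.2 := by
  by_contra! ⟨hx₁, hx₂⟩
  have h₁ : ¬Consistent E (insert x q.1, q.2) := fun h =>
    hx₁ ((hq.2 h ⟨Set.subset_insert x q.1, le_rfl⟩).1 (Set.mem_insert x q.1))
  have h₂ : ¬Consistent E (q.1, insert x q.2) := fun h =>
    hx₂ ((hq.2 h ⟨le_rfl, Set.subset_insert x q.2⟩).2 (Set.mem_insert x q.2))
  simp only [Consistent, not_forall, not_not] at h₁ h₂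
  obtain ⟨A₁, B₁, hA₁, hB₁, hE₁⟩ := h₁
  obtain ⟨A₂, B₂, hA₂, hB₂, hE₂⟩ := h₂
  refine hq.1 (A₁.erase x ∪ A₂) (B₁ ∪ B₂.erase x) (by grind) (by grind)
    (hE.cut _ _ x ?_ ?_)
  · exact hE.weaken hE₁ (by grind) Finset.subset_union_left
  · exact hE.weaken hE₂ Finset.subset_union_right (by grind)

theorem isModel_of_maximal (hE : IsEntailmentRelation E) {q : Set S × Set S}
    (hq : Maximal (Consistent E) q) : IsModel E q.1 := by
  intro A B hAB hA
  by_contra! hB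
  exact hq.1 A B hA (fun b hb => (hE.mem_or_mem_of_maximal hq b).resolve_left (hB b hb)) hAB

theorem exists_isModel_of_not (hE : IsEntailmentRelation E) {A B : Finset S} (h : ¬E A B) :
    ∃ M, IsModel E M ∧ ↑A ⊆ M ∧ Disjoint M ↑B := by
  have hAB : Consistent E (↑A, ↑B) := fun A' B' hA' hB' h' =>
    h (hE.weaken h' (Finset.coe_subset.1 hA') (Finset.coe_subset.1 hB'))
  obtain ⟨q, hle, hq⟩ := hAB.exists_maximal
  exact ⟨q.1, hE.isModel_of_maximal hq, hle.1,
    (hE.disjoint_of_consistent hq.1).mono_right hle.2⟩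

theorem iff_forall_isModel (hE : IsEntailmentRelation E) (A B : Finset S) :
    E A B ↔ ∀ M, IsModel E M → ↑A ⊆ M → ∃ b ∈ B, b ∈ M := by
  refine ⟨fun h M hM hA => hM A B h hA, fun h => ?_⟩
  by_contra hAB
  obtain ⟨M, hM, hA, hB⟩ := hE.exists_isModel_of_not hAB
  obtain ⟨b, hb, hbM⟩ := h M hM hA
  exact Set.disjoint_left.1 hB hbM hb

end IsEntailmentRelation

theorem stmt_13 {S : Type} [DecidableEq S] (E : Finset S → Finset S → Prop)
    (hrefl : ∀ a : S, E {a} {a})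
    (hmono : ∀ A B A' B' : Finset S, E A B → E (A ∪ A') (B ∪ B'))
    (hcut : ∀ (A B : Finset S) (x : S), E (insert x A) B → E A (insert x B) → E A B) :
    ∃ (T : Type) (_ : DistribLattice T) (_ : BoundedOrder T) (f : S → T),
      ∀ A B : Finset S, A.inf f ≤ B.sup f ↔ E A B := by
  have hE : IsEntailmentRelation E := ⟨hrefl, hmono, hcut⟩
  refine ⟨Set {M : Set S // Entailment.IsModel E M}, inferInstance, inferInstance,
    fun a => {M | a ∈ M.1}, fun A B => ?_⟩
  rw [hE.iff_forall_isModel, Finset.inf_set_eq_iInter, Finset.sup_set_eq_biUnion]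
  simp [Set.subset_def]
end

section
/- Radical membership descends along integral extensions. Let R ⊆ S be commutative rings (S an R-algebra with injective structure map) with S integral over R. Let I be an ideal of R and x ∈ R. Then x belongs to the radical of I in R if and only if the image of x in S belongs to the radical of the extended ideal I·S in S. -/
theorem stmt_14 {R S : Type*} [CommRing R] [CommRing S] [Algebra R S]
    (hinj : Function.Injective (algebraMap R S)) [Algebra.IsIntegral R S]
    (I : Ideal R) (x : R) :
    x ∈ I.radical ↔ algebraMap R S x ∈ (I.map (algebraMap R S)).radical := by
  constructor
  · rintro ⟨n, hn⟩
    exact ⟨n, by rw [← map_pow]; exact Ideal.mem_map_of_mem _ hn⟩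
  · intro hx
    rw [Ideal.radical_eq_sInf]
    refine Ideal.mem_sInf.mpr ?_
    rintro p ⟨hIp, hp⟩
    haveI := hp
    have hker : (⊥ : Ideal S).comap (algebraMap R S) ≤ p := by
      intro y hy
      have : algebraMap R S y = 0 := hy
      have : y = 0 := hinj (by simpa using this)
      simp [this]
    obtain ⟨Q, _, hQp, hQc⟩ := Ideal.exists_ideal_over_prime_of_isIntegral p ⊥ hker
    have hmap : I.map (algebraMap R S) ≤ Q :=
      Ideal.map_le_iff_le_comap.mpr (hQc ▸ hIp)
    have : algebraMap R S x ∈ Q := by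
      have := Ideal.radical_mono hmap hx
      rwa [hQp.radical] at this
    rw [← hQc]
    exact this
end

section
/- Going Down for integral extensions of integrally closed domains (classical chain version). Let R ⊆ S be integral domains (S an R-algebra with injective structure map) with S integral over R and R integrally closed in its field of fractions. Let Q_{ℓ+1} ⊆ ⋯ ⊆ Q_{ℓ+r} be prime ideals of S, let P_i = Q_i ∩ R for i = ℓ+1,…,ℓ+r, and let P₁ ⊆ ⋯ ⊆ P_ℓ be prime ideals of R with P_ℓ ⊆ P_{ℓ+1}. Then there exist prime ideals Q₁,…,Q_ℓ of S with Q₁ ⊆ ⋯ ⊆ Q_ℓ ⊆ Q_{ℓ+1} and Q_j ∩ R = P_j for j = 1,…,ℓ. -/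
lemma Fin.monotone_snoc {α : Type*} [Preorder α] {n : ℕ} {f : Fin n → α} {a : α}
    (hf : Monotone f) (ha : ∀ i, f i ≤ a) : Monotone (Fin.snoc f a : Fin (n + 1) → α) := by
  intro i j hij
  induction j using Fin.lastCases with
  | last => induction i using Fin.lastCases <;> simp [ha]
  | cast j =>
    induction i using Fin.lastCases with
    | last => exact absurd hij (Fin.castSucc_lt_last j).not_ge
    | cast i => simpa using hf (Fin.castSucc_le_castSucc_iff.1 hij)

namespace Ideal

variable {R S : Type*} [CommRing R] [CommRing S] [Algebra R S] [Algebra.HasGoingDown R S]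

lemma exists_isPrime_le_comap_eq_of_le {p : Ideal R} [p.IsPrime] (Q : Ideal S) [Q.IsPrime]
    (hpQ : p ≤ Q.comap (algebraMap R S)) :
    ∃ P ≤ Q, P.IsPrime ∧ P.comap (algebraMap R S) = p := by
  obtain ⟨P, hPQ, hP, hPp⟩ := exists_ideal_le_liesOver_of_le (q := Q.under R) Q hpQ
  exact ⟨P, hPQ, hP, (P.over_def p).symm⟩

lemma exists_monotone_isPrime_le_comap_eq {n : ℕ} (P : Fin n → Ideal R)
    (hP : ∀ j, (P j).IsPrime) (hPmono : Monotone P) (Q : Ideal S) [Q.IsPrime]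
    (hPQ : ∀ j, P j ≤ Q.comap (algebraMap R S)) :
    ∃ Q' : Fin n → Ideal S, (∀ j, (Q' j).IsPrime) ∧ Monotone Q' ∧ (∀ j, Q' j ≤ Q) ∧
      ∀ j, (Q' j).comap (algebraMap R S) = P j := by
  induction n generalizing Q with
  | zero => exact ⟨Fin.elim0, nofun, fun i => i.elim0, nofun, nofun⟩
  | succ n ih =>
    have := hP (Fin.last n)
    obtain ⟨Qₙ, hQₙQ, hQₙ, hQₙP⟩ := exists_isPrime_le_comap_eq_of_le Q (hPQ (Fin.last n))
    obtain ⟨Q', hQ', hQ'mono, hQ'Qₙ, hQ'P⟩ := ih (P ∘ Fin.castSucc) (fun j => hP _)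
      (hPmono.comp Fin.strictMono_castSucc.monotone) Qₙ
      (fun j => hQₙP ▸ hPmono (Fin.le_last _))
    refine ⟨Fin.snoc Q' Qₙ, Fin.lastCases ?_ ?_, Fin.monotone_snoc hQ'mono hQ'Qₙ,
      Fin.lastCases ?_ ?_, Fin.lastCases ?_ ?_⟩ <;> intros <;> simp_all [(hQ'Qₙ _).trans hQₙQ]

end Ideal

theorem stmt_17 {R S : Type*} [CommRing R] [CommRing S] [IsDomain S]
    [Algebra R S] (hinj : Function.Injective (algebraMap R S))
    [Algebra.IsIntegral R S] [IsIntegrallyClosed R]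
    {ℓ r : ℕ} (hℓ : 0 < ℓ) (hr : 0 < r)
    (Q : Fin r → Ideal S) (hQprime : ∀ i, (Q i).IsPrime)
    (P : Fin ℓ → Ideal R) (hPprime : ∀ j, (P j).IsPrime) (hPmono : Monotone P)
    (hlink : P ⟨ℓ - 1, by omega⟩ ≤ (Q ⟨0, hr⟩).comap (algebraMap R S)) :
    ∃ Q' : Fin ℓ → Ideal S, (∀ j, (Q' j).IsPrime) ∧ Monotone Q' ∧
      Q' ⟨ℓ - 1, by omega⟩ ≤ Q ⟨0, hr⟩ ∧
      ∀ j, (Q' j).comap (algebraMap R S) = P j := by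
  -- Enables Mathlib's `Algebra.HasGoingDown` instance for integral extensions of an
  -- integrally closed domain.
  have : FaithfulSMul R S := (faithfulSMul_iff_algebraMap_injective R S).mpr hinj
  have := hQprime ⟨0, hr⟩
  have hPQ : ∀ j, P j ≤ (Q ⟨0, hr⟩).comap (algebraMap R S) :=
    fun j => (hPmono (Fin.le_def.2 (Nat.le_sub_one_of_lt j.2))).trans hlink
  obtain ⟨Q', hQ', hQ'mono, hQ'Q, hQ'P⟩ :=
    Ideal.exists_monotone_isPrime_le_comap_eq P hPprime hPmono _ hPQ
  exact ⟨Q', hQ', hQ'mono, hQ'Q _, hQ'P⟩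
end
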